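/- arXiv:1403.0476 — 3 statements merged into one kernel-verified Lean document; each statement's English description precedes it below -/
import Mathlib

section
/- Let Γ be a valued constraint language over a finite set D that contains every unary cost function D → ℚ ∪ {∞}, and suppose Pol⁺(Γ) contains an idempotent cyclic operation. Then for every two-element subset {x,y} ⊆ D there exists no binary cost function ϱ ∈ wRelClo(Γ) such that (x,y), (y,x) ∈ Feas(ϱ), ϱ(x,x) + ϱ(y,y) > ϱ(x,y) + ϱ(y,x), and at least one of the pairs (x,x), (y,y) belongs to Feas(ϱ). -/
/-! Basic framework for Valued Constraint Satisfaction Problems (VCSP):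
operations, clones, weightings, weighted clones, cost functions,
(weighted/fractional) polymorphisms, expressibility and weighted relational clones. -/

/-- A `k`-ary operation on `D`. -/
abbrev Op (D : Type) (k : ℕ) : Type := (Fin k → D) → D

/-- The `i`-th `k`-ary projection on `D`. -/
def proj (D : Type) {k : ℕ} (i : Fin k) : Op D k := fun x => x i

/-- An operation is a projection. -/
def IsProj {D : Type} {k : ℕ} (f : Op D k) : Prop := ∃ i : Fin k, f = proj D i

/-- Superposition `f[g₁,…,g_k]` of a `k`-ary operation with `k` many `l`-ary operations. -/
def superposeOp {D : Type} {k l : ℕ} (f : Op D k) (g : Fin k → Op D l) : Op D l :=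
  fun x => f fun i => g i x

/-- A clone of operations on `D`: contains all projections and is closed under superposition. -/
structure IsClone {D : Type} (C : ∀ k, Set (Op D k)) : Prop where
  proj_mem : ∀ (k : ℕ) (i : Fin k), proj D i ∈ C k
  superpose_mem : ∀ (k l : ℕ) (f : Op D k) (g : Fin k → Op D l),
    f ∈ C k → (∀ i, g i ∈ C l) → superposeOp f g ∈ C l

/-- A `k`-ary weighting of the clone `C`: a rational-valued function on `k`-ary operations,
vanishing outside `C`, summing to `0`, and negative only on projections. -/
structure IsWeighting {D : Type} [Fintype D] [DecidableEq D] (C : ∀ k, Set (Op D k))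
    {k : ℕ} (ω : Op D k → ℚ) : Prop where
  support_mem : ∀ f : Op D k, ω f ≠ 0 → f ∈ C k
  sum_zero : ∑ f : Op D k, ω f = 0
  neg_imp_proj : ∀ f : Op D k, ω f < 0 → IsProj f

/-- Superposition of a `k`-ary weighting with `k` many `l`-ary operations. -/
def wSuperpose {D : Type} [Fintype D] [DecidableEq D] {k l : ℕ}
    (ω : Op D k → ℚ) (g : Fin k → Op D l) : Op D l → ℚ :=
  fun f' => ∑ f ∈ Finset.univ.filter (fun f : Op D k => superposeOp f g = f'), ω f

/-- A weighted clone over the clone `C`: a nonempty family of weightings of `C` closed under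
non-negative scaling, addition of weightings of equal arity and proper superposition. -/
structure IsWeightedClone {D : Type} [Fintype D] [DecidableEq D]
    (C : ∀ k, Set (Op D k)) (W : ∀ k, Set (Op D k → ℚ)) : Prop where
  clone : IsClone C
  weighting : ∀ (k : ℕ), ∀ ω ∈ W k, IsWeighting C ω
  nonempty : ∃ k, (W k).Nonempty
  scale_mem : ∀ (k : ℕ) (c : ℚ), 0 ≤ c → ∀ ω ∈ W k, (fun f => c * ω f) ∈ W k
  add_mem : ∀ (k : ℕ), ∀ ω₁ ∈ W k, ∀ ω₂ ∈ W k, (fun f => ω₁ f + ω₂ f) ∈ W k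
  superpose_mem : ∀ (k l : ℕ), ∀ ω ∈ W k, ∀ g : Fin k → Op D l,
    (∀ i, g i ∈ C l) → IsWeighting C (wSuperpose ω g) → wSuperpose ω g ∈ W l

/-- The positive clone of a family of weightings: all projections together with all operations
receiving positive weight from some weighting in the family. -/
def posClone {D : Type} [Fintype D] [DecidableEq D] (W : ∀ k, Set (Op D k → ℚ)) :
    ∀ k, Set (Op D k) :=
  fun k => {f | IsProj f ∨ ∃ ω ∈ W k, 0 < ω f}

/-- An `r`-ary cost function on `D`, with values in `ℚ ∪ {∞}`. -/
abbrev CostF (D : Type) (r : ℕ) : Type := (Fin r → D) → WithTop ℚ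

/-- The feasibility relation of a cost function. -/
def Feas {D : Type} {r : ℕ} (ϱ : CostF D r) : Set (Fin r → D) := {x | ϱ x ≠ ⊤}

/-- Coordinate-wise application of a `k`-ary operation to `k` many `r`-tuples. -/
def appRows {D : Type} {k r : ℕ} (f : Op D k) (xs : Fin k → Fin r → D) : Fin r → D :=
  fun j => f fun i => xs i j

/-- `f` is a polymorphism of `ϱ`: `Feas ϱ` is closed under coordinate-wise application of `f`. -/
def IsPolymorphism {D : Type} {k r : ℕ} (f : Op D k) (ϱ : CostF D r) : Prop :=
  ∀ xs : Fin k → Fin r → D, (∀ i, xs i ∈ Feas ϱ) → appRows f xs ∈ Feas ϱ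

/-- A valued constraint language on `D`: a set of cost functions of various arities. -/
abbrev VLang (D : Type) : Type := Set (Σ r : ℕ, CostF D r)

/-- The clone of polymorphisms of a language. -/
def Pol {D : Type} (Γ : VLang D) : ∀ k, Set (Op D k) :=
  fun _ => {f | ∀ ϱ ∈ Γ, IsPolymorphism f ϱ.2}

/-- Multiplication of an element of `ℚ ∪ {∞}` by a rational scalar (`c·∞ = ∞`). -/
def qmul (c : ℚ) (x : WithTop ℚ) : WithTop ℚ := WithTop.map (fun q => c * q) x

/-- The sum `∑_f ω(f)·ϱ(f(x₁,…,x_k))`, over operations with non-zero weight. -/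
def wSum {D : Type} [Fintype D] [DecidableEq D] {k r : ℕ}
    (ω : Op D k → ℚ) (ϱ : CostF D r) (xs : Fin k → Fin r → D) : WithTop ℚ :=
  ∑ f ∈ Finset.univ.filter (fun f : Op D k => ω f ≠ 0), qmul (ω f) (ϱ (appRows f xs))

/-- `ω` is a weighted polymorphism of the language `Γ`. -/
def IsWeightedPolymorphism {D : Type} [Fintype D] [DecidableEq D] (Γ : VLang D)
    {k : ℕ} (ω : Op D k → ℚ) : Prop :=
  IsWeighting (Pol Γ) ω ∧
    ∀ ϱ ∈ Γ, ∀ xs : Fin k → Fin ϱ.1 → D, (∀ i, xs i ∈ Feas ϱ.2) → wSum ω ϱ.2 xs ≤ 0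

/-- The weighted polymorphisms of a language. -/
def wPol {D : Type} [Fintype D] [DecidableEq D] (Γ : VLang D) :
    ∀ k, Set (Op D k → ℚ) :=
  fun _ => {ω | IsWeightedPolymorphism Γ ω}

/-- The positive clone `Pol⁺(Γ)` of a language. -/
def PolPlus {D : Type} [Fintype D] [DecidableEq D] (Γ : VLang D) : ∀ k, Set (Op D k) :=
  posClone (wPol Γ)

/-- The map `D → D` induced by a unary operation. -/
def unaryFun {D : Type} (f : Op D 1) : D → D := fun x => f fun _ => x

/-- A language is a core if every unary operation in its positive clone is bijective. -/
def IsCore {D : Type} [Fintype D] [DecidableEq D] (Γ : VLang D) : Prop :=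
  ∀ f ∈ PolPlus Γ 1, Function.Bijective (unaryFun f)

/-- An idempotent operation. -/
def Idem {D : Type} {k : ℕ} (f : Op D k) : Prop := ∀ x : D, (f fun _ => x) = x

/-- A cyclic operation: `f(x₁,…,x_k) = f(x₂,…,x_k,x₁)`. -/
def CyclicOp {D : Type} {k : ℕ} (f : Op D k) : Prop :=
  ∀ x : Fin k → D, f x = f (x ∘ ⇑(finRotate k))

/-- A conservative operation. -/
def Conservative {D : Type} {k : ℕ} (f : Op D k) : Prop :=
  ∀ x : Fin k → D, ∃ i, f x = x i

/-- A Taylor operation. -/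
def IsTaylor {D : Type} {k : ℕ} (t : Op D k) : Prop :=
  Idem t ∧ ∀ j : Fin k, ∃ a b : Fin k → Fin 2, a j = 0 ∧ b j = 1 ∧
    ∀ u : Fin 2 → D, (t fun i => u (a i)) = t fun i => u (b i)

/-- An instance of `VCSP(Γ)` with variable set `V`: a finite multiset of constraints,
each a tuple of variables together with a cost function from `Γ`. -/
structure VInstance (D : Type) (Γ : VLang D) (V : Type) where
  cons : Multiset (Σ r : ℕ, (Fin r → V) × CostF D r)
  mem_lang : ∀ c ∈ cons, (⟨c.1, c.2.2⟩ : Σ r : ℕ, CostF D r) ∈ Γ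

/-- The cost of an assignment for a VCSP instance. -/
def VInstance.cost {D V : Type} {Γ : VLang D} (I : VInstance D Γ V) (s : V → D) :
    WithTop ℚ :=
  (I.cons.map fun c => c.2.2 fun i => s (c.2.1 i)).sum

/-- A cost function is expressible over a language `Δ`. -/
def Expressible {D : Type} [Fintype D] [DecidableEq D] (Δ : VLang D) {r : ℕ}
    (ϱ : CostF D r) : Prop :=
  ∃ (n : ℕ) (I : VInstance D Δ (Fin n)) (v : Fin r → Fin n),
    ∀ x : Fin r → D,
      ϱ x = (Finset.univ.filter fun s : Fin n → D => ∀ i, s (v i) = x i).inf fun s => I.cost s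

/-- A language is closed under expressibility, non-negative scaling and
addition of rational constants. -/
def IsWClosed {D : Type} [Fintype D] [DecidableEq D] (Δ : VLang D) : Prop :=
  (∀ (r : ℕ) (ϱ : CostF D r), Expressible Δ ϱ → (⟨r, ϱ⟩ : Σ r : ℕ, CostF D r) ∈ Δ) ∧
  (∀ (r : ℕ) (ϱ : CostF D r) (c : ℚ), 0 ≤ c → (⟨r, ϱ⟩ : Σ r : ℕ, CostF D r) ∈ Δ →
    (⟨r, fun x => qmul c (ϱ x)⟩ : Σ r : ℕ, CostF D r) ∈ Δ) ∧
  (∀ (r : ℕ) (ϱ : CostF D r) (c : ℚ), (⟨r, ϱ⟩ : Σ r : ℕ, CostF D r) ∈ Δ →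
    (⟨r, fun x => ϱ x + (c : WithTop ℚ)⟩ : Σ r : ℕ, CostF D r) ∈ Δ)

/-- The weighted relational clone generated by `Γ`: the smallest language containing `Γ`
closed under expressibility, non-negative scaling and addition of rational constants. -/
def wRelClo {D : Type} [Fintype D] [DecidableEq D] (Γ : VLang D) : VLang D :=
  ⋂₀ {Δ : VLang D | Γ ⊆ Δ ∧ IsWClosed Δ}

/-- The weighting `(1/k)(∑_i 1_{f_i} − ∑_i 1_{π_i})` associated with a `k`-tuple of
`k`-ary operations (a multimorphism), weights added with multiplicity. -/
def multimorphismW {D : Type} [Fintype D] [DecidableEq D] {k : ℕ} (F : Fin k → Op D k) :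
    Op D k → ℚ :=
  fun g => (1 / (k : ℚ)) *
    (((Finset.univ.filter fun i : Fin k => F i = g).card : ℚ) -
     ((Finset.univ.filter fun i : Fin k => proj D i = g).card : ℚ))

/-- `Γ` admits the multimorphism `⟨F 0, …, F (k-1)⟩`. -/
def AdmitsMultimorphism {D : Type} [Fintype D] [DecidableEq D] {k : ℕ}
    (Γ : VLang D) (F : Fin k → Op D k) : Prop :=
  multimorphismW F ∈ wPol Γ k

/-- An `m`-ary fractional operation: a probability distribution on `m`-ary operations. -/
def IsFracOp {D : Type} [Fintype D] [DecidableEq D] {m : ℕ} (ω : Op D m → ℝ) : Prop :=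
  (∀ f, 0 ≤ ω f) ∧ ∑ f : Op D m, ω f = 1

/-- Multiplication of an element of `ℚ ∪ {∞}` by a real scalar, landing in `ℝ ∪ {∞}`. -/
def rmul (c : ℝ) (x : WithTop ℚ) : WithTop ℝ := WithTop.map (fun q : ℚ => c * (q : ℝ)) x

/-- `ω` is a fractional polymorphism of the language `Γ`. -/
def IsFracPolymorphism {D : Type} [Fintype D] [DecidableEq D] (Γ : VLang D) {m : ℕ}
    (ω : Op D m → ℝ) : Prop :=
  IsFracOp ω ∧ ∀ ϱ ∈ Γ, ∀ xs : Fin m → Fin ϱ.1 → D, (∀ i, xs i ∈ Feas ϱ.2) →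
    (∑ g ∈ Finset.univ.filter fun g : Op D m => 0 < ω g, rmul (ω g) (ϱ.2 (appRows g xs)))
      ≤ rmul (1 / (m : ℝ)) (∑ i : Fin m, ϱ.2 (xs i))

/-- The positive clone `fPol⁺(Γ)` defined via fractional polymorphisms. -/
def fPolPlus {D : Type} [Fintype D] [DecidableEq D] (Γ : VLang D) : ∀ k, Set (Op D k) :=
  fun k => {f | IsProj f ∨ ∃ ω : Op D k → ℝ, IsFracPolymorphism Γ ω ∧ 0 < ω f}

/-- Application of a binary operation to two elements. -/
def ap2 {D : Type} (f : Op D 2) (a b : D) : D := f ![a, b]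

/-- Application of a ternary operation to three elements. -/
def ap3 {D : Type} (f : Op D 3) (a b c : D) : D := f ![a, b, c]

/-- A ternary operation restricts to a majority operation on a subset `S`. -/
def IsMajorityOn {D : Type} (f : Op D 3) (S : Set D) : Prop :=
  ∀ x ∈ S, ∀ y ∈ S, ap3 f x x y = x ∧ ap3 f x y x = x ∧ ap3 f y x x = x

/-- A ternary operation restricts to a minority operation on a subset `S`. -/
def IsMinorityOn {D : Type} (f : Op D 3) (S : Set D) : Prop :=
  ∀ x ∈ S, ∀ y ∈ S, ap3 f x x y = y ∧ ap3 f x y x = y ∧ ap3 f y x x = y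

/-- The language `Γ_c`: `Γ` together with all unary cost functions `N_a`
(`N_a(a) = 0`, `N_a(x) = ∞` for `x ≠ a`). -/
def withConstants {D : Type} [DecidableEq D] (Γ : VLang D) : VLang D :=
  Γ ∪ {p : Σ r : ℕ, CostF D r |
        ∃ a : D, p = ⟨1, fun x => if x 0 = a then (0 : WithTop ℚ) else ⊤⟩}

/-- A language is conservative if it contains every `{0,1}`-valued unary cost function. -/
def ConservativeLang {D : Type} (Γ : VLang D) : Prop :=
  ∀ ϱ : CostF D 1, (∀ x, ϱ x = 0 ∨ ϱ x = 1) → (⟨1, ϱ⟩ : Σ r : ℕ, CostF D r) ∈ Γ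

/-- The coordinate-wise action of a `k`-ary operation on `A` on the power `A^n`. -/
def opPow {A : Type} (n : ℕ) {k : ℕ} (f : Op A k) : Op (Fin n → A) k :=
  fun xs c => f fun i => xs i c

/-- Regrouping an `(n·r)`-tuple over `A` into an `r`-tuple of elements of `A^n`. -/
def regroup (A : Type) (n r : ℕ) (y : Fin (n * r) → A) : Fin r → Fin n → A :=
  fun j c => y (finProdFinEquiv (c, j))

/-! A weighting `ω ∈ wPol Γ` that puts positive weight on a cyclic `f` improves every cost
function of `wRelClo Γ`. Since `Γ` contains all unary cost functions, `ω` is balanced on every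
column (`∑_g ω g · [g c = a] = 0`) and the operations it weighs preserve `{x, y}`. Apply `ω` to
the unit columns `eᵢ = (x, …, x, y, x, …, x)`. Feeding the pairs `(eᵢ, eⱼ)` to a soft violation `ϱ`
shows that no operation of positive weight maps two different `eᵢ` to `y`; balancing then
forces each such operation to map some `eᵢ` to `y`. A cyclic `f` takes the same value on all
`eᵢ`, which is impossible. -/

open Finset

section Improvement

variable {D : Type} [Fintype D] [DecidableEq D] {k r : ℕ}

def Improves (ω : Op D k → ℚ) (ϱ : CostF D r) : Prop :=
  (∀ h, ω h ≠ 0 → IsPolymorphism h ϱ) ∧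
    ∀ xs : Fin k → Fin r → D, (∀ i, xs i ∈ Feas ϱ) → wSum ω ϱ xs ≤ 0

def improvedLang (ω : Op D k → ℚ) : VLang D := {p | Improves ω p.2}

lemma qmul_le_qmul {c : ℚ} (hc : 0 ≤ c) {a b : WithTop ℚ} (h : a ≤ b) :
    qmul c a ≤ qmul c b := by
  induction b with
  | top => exact le_top
  | coe b =>
    obtain ⟨a, rfl⟩ := WithTop.ne_top_iff_exists.mp (ne_top_of_le_ne_top WithTop.coe_ne_top h)
    exact WithTop.coe_le_coe.mpr (mul_le_mul_of_nonneg_left (WithTop.coe_le_coe.mp h) hc)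

lemma qmul_multiset_sum (c : ℚ) (m : Multiset (WithTop ℚ)) :
    qmul c m.sum = (m.map (qmul c)).sum :=
  map_multiset_sum (AddMonoidHom.mulLeft c).withTopMap m

lemma wSum_eq_coe_sum {ω : Op D k → ℚ} {ϱ : CostF D r} {xs : Fin k → Fin r → D}
    (hfin : ∀ h, ω h ≠ 0 → ϱ (appRows h xs) ≠ ⊤) :
    wSum ω ϱ xs = ((∑ h, ω h * (ϱ (appRows h xs)).untopD 0 : ℚ) : WithTop ℚ) := by
  rw [← sum_filter_of_ne fun h _ hne => left_ne_zero_of_mul hne, WithTop.coe_sum]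
  refine sum_congr rfl fun h hh => ?_
  obtain ⟨q, hq⟩ := WithTop.ne_top_iff_exists.mp (hfin h (mem_filter.mp hh).2)
  rw [← hq]
  rfl

lemma improves_iff_sum_nonpos {ω : Op D k → ℚ} {ϱ : CostF D r} :
    Improves ω ϱ ↔ (∀ h, ω h ≠ 0 → IsPolymorphism h ϱ) ∧
      ∀ xs : Fin k → Fin r → D, (∀ i, xs i ∈ Feas ϱ) →
        ∑ h, ω h * (ϱ (appRows h xs)).untopD 0 ≤ 0 :=
  and_congr_right fun hpol => forall₂_congr fun xs hxs => by
    rw [wSum_eq_coe_sum fun h hh => hpol h hh xs hxs, WithTop.coe_le_zero]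

lemma Improves.of_affine {ω : Op D k → ℚ} (hsum : ∑ h, ω h = 0) {ϱ ϱ' : CostF D r}
    (hϱ : Improves ω ϱ) {c d : ℚ} (hc : 0 ≤ c) (hfeas : Feas ϱ' = Feas ϱ)
    (hval : ∀ z ∈ Feas ϱ, (ϱ' z).untopD 0 = c * (ϱ z).untopD 0 + d) : Improves ω ϱ' := by
  rw [improves_iff_sum_nonpos] at hϱ ⊢
  obtain ⟨hpol, hle⟩ := hϱ
  simp only [IsPolymorphism, hfeas]
  refine ⟨hpol, fun xs hxs => ?_⟩
  calc ∑ h, ω h * (ϱ' (appRows h xs)).untopD 0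
      = c * ∑ h, ω h * (ϱ (appRows h xs)).untopD 0 + d * ∑ h, ω h := by
        rw [mul_sum, mul_sum, ← sum_add_distrib]
        refine sum_congr rfl fun h _ => ?_
        by_cases hh : ω h = 0
        · simp [hh]
        · rw [hval _ (hpol h hh xs hxs)]
          ring
    _ ≤ 0 := by
        rw [hsum, mul_zero, add_zero]
        exact mul_nonpos_of_nonneg_of_nonpos hc (hle xs hxs)

end Improvement

lemma VInstance.cost_ne_top_iff {D V : Type} {Δ : VLang D} (I : VInstance D Δ V) (s : V → D) :
    I.cost s ≠ ⊤ ↔ ∀ c ∈ I.cons, c.2.2 (fun i => s (c.2.1 i)) ≠ ⊤ := by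
  rw [VInstance.cost]
  induction I.cons using Multiset.induction with
  | empty => simp
  | cons c m ih => simp [ih]

section Expressibility

variable {D : Type} [Fintype D] [DecidableEq D] {Δ : VLang D} {n r : ℕ}
  {I : VInstance D Δ (Fin n)} {v : Fin r → Fin n} {ϱ : CostF D r}

lemma le_cost_of_extends
    (hϱ : ∀ x, ϱ x = (univ.filter fun s : Fin n → D => ∀ i, s (v i) = x i).inf I.cost)
    {x : Fin r → D} {s : Fin n → D} (hs : ∀ i, s (v i) = x i) : ϱ x ≤ I.cost s :=
  (hϱ x).trans_le (inf_le (mem_filter.mpr ⟨mem_univ s, hs⟩))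

lemma exists_cost_eq_of_ne_top
    (hϱ : ∀ x, ϱ x = (univ.filter fun s : Fin n → D => ∀ i, s (v i) = x i).inf I.cost)
    {x : Fin r → D} (hx : ϱ x ≠ ⊤) : ∃ s : Fin n → D, (∀ i, s (v i) = x i) ∧ I.cost s = ϱ x := by
  have hne : (univ.filter fun s : Fin n → D => ∀ i, s (v i) = x i).Nonempty := by
    rw [nonempty_iff_ne_empty]
    rintro hempty
    rw [hϱ, hempty, inf_empty] at hx
    exact hx rfl
  obtain ⟨s, hs, hcost⟩ := exists_mem_eq_inf _ hne I.cost
  exact ⟨s, (mem_filter.mp hs).2, by rw [hϱ, hcost]⟩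

lemma isPolymorphism_of_expressible
    (hϱ : ∀ x, ϱ x = (univ.filter fun s : Fin n → D => ∀ i, s (v i) = x i).inf I.cost)
    {k : ℕ} {h : Op D k} (hpol : ∀ c ∈ I.cons, IsPolymorphism h c.2.2) : IsPolymorphism h ϱ := by
  intro xs hxs
  choose s hs hcost using fun i => exists_cost_eq_of_ne_top hϱ (hxs i)
  have hrows : ∀ c ∈ I.cons, ∀ i, (fun j => s i (c.2.1 j)) ∈ Feas c.2.2 := fun c hc i =>
    (I.cost_ne_top_iff (s i)).mp (by rw [hcost i]; exact hxs i) c hc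
  refine ne_top_of_le_ne_top ?_ (le_cost_of_extends hϱ (s := fun m => h fun i => s i m) ?_)
  · exact (I.cost_ne_top_iff _).mpr fun c hc => hpol c hc _ (hrows c hc)
  · intro j
    simp only [appRows, hs]

end Expressibility

section Closure

variable {D : Type} [Fintype D] [DecidableEq D] {k n r : ℕ} {ω : Op D k → ℚ}

/-- Project optimal extensions `s i` of the rows `xs i` through each `h`: for `ω h > 0` this only
overestimates `ϱ`, and on the projections, where `ω` may be negative, it is exact. -/
lemma wSum_nonpos_of_expressible (hneg : ∀ h, ω h < 0 → IsProj h)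
    {I : VInstance D (improvedLang ω) (Fin n)} {v : Fin r → Fin n} {ϱ : CostF D r}
    (hϱ : ∀ x, ϱ x = (univ.filter fun s : Fin n → D => ∀ i, s (v i) = x i).inf I.cost)
    {xs : Fin k → Fin r → D} (hxs : ∀ i, xs i ∈ Feas ϱ) : wSum ω ϱ xs ≤ 0 := by
  choose s hs hcost using fun i => exists_cost_eq_of_ne_top hϱ (hxs i)
  have hrows : ∀ c ∈ I.cons, ∀ i, (fun j => s i (c.2.1 j)) ∈ Feas c.2.2 := fun c hc i =>
    (I.cost_ne_top_iff (s i)).mp (by rw [hcost i]; exact hxs i) c hc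
  calc wSum ω ϱ xs
      ≤ ∑ h ∈ univ.filter (fun h => ω h ≠ 0), qmul (ω h) (I.cost fun m => h fun i => s i m) := by
        refine sum_le_sum fun h hh => ?_
        rcases (mem_filter.mp hh).2.lt_or_gt with hlt | hgt
        · obtain ⟨m, rfl⟩ := hneg h hlt
          exact (congrArg (qmul _) (hcost m)).ge
        · exact qmul_le_qmul hgt.le (le_cost_of_extends hϱ fun j => by simp only [appRows, hs])
    _ = (I.cons.map fun c => wSum ω c.2.2 fun i j => s i (c.2.1 j)).sum := by
        simp only [VInstance.cost, qmul_multiset_sum, Multiset.map_map, wSum,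
          sum_eq_multiset_sum]
        exact Multiset.sum_map_sum_map _ _
    _ ≤ 0 := by
        refine (Multiset.sum_le_card_nsmul _ 0 ?_).trans_eq (nsmul_zero _)
        simp only [Multiset.mem_map]
        rintro _ ⟨c, hc, rfl⟩
        exact (I.mem_lang c hc).2 _ (hrows c hc)

lemma isWClosed_improvedLang (hsum : ∑ h, ω h = 0) (hneg : ∀ h, ω h < 0 → IsProj h) :
    IsWClosed (improvedLang ω) := by
  refine ⟨?_, ?_, ?_⟩
  · rintro r ϱ ⟨n, I, v, hϱ⟩
    exact ⟨fun h hh => isPolymorphism_of_expressible hϱ fun c hc => (I.mem_lang c hc).1 h hh,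
      fun xs hxs => wSum_nonpos_of_expressible hneg hϱ hxs⟩
  · intro r ϱ c hc hϱ
    refine Improves.of_affine hsum hϱ hc (d := 0) ?_ ?_
    · ext z
      simp only [Feas, qmul, Set.mem_ofPred_eq, ne_eq, WithTop.map_eq_top_iff]
    · intro z hz
      obtain ⟨q, hq⟩ := WithTop.ne_top_iff_exists.mp hz
      dsimp only at hq ⊢
      rw [← hq, add_zero]
      rfl
  · intro r ϱ d hϱ
    refine Improves.of_affine hsum hϱ zero_le_one (c := 1) (d := d) ?_ ?_
    · ext z
      simp only [Feas, Set.mem_ofPred_eq, ne_eq, WithTop.add_eq_top, WithTop.coe_ne_top, or_false]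
    · intro z hz
      obtain ⟨q, hq⟩ := WithTop.ne_top_iff_exists.mp hz
      dsimp only at hq ⊢
      rw [← hq, ← WithTop.coe_add, WithTop.untopD_coe, WithTop.untopD_coe, one_mul]

lemma subset_improvedLang {Γ : VLang D} (hω : ω ∈ wPol Γ k) : Γ ⊆ improvedLang ω :=
  fun p hp => ⟨fun h hh => hω.1.support_mem h hh p hp, hω.2 p hp⟩

lemma wRelClo_subset_improvedLang {Γ : VLang D} (hω : ω ∈ wPol Γ k) :
    wRelClo Γ ⊆ improvedLang ω :=
  Set.sInter_subset_of_mem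
    ⟨subset_improvedLang hω, isWClosed_improvedLang hω.1.sum_zero hω.1.neg_imp_proj⟩

end Closure

lemma apply_mem_of_mem_pol {D : Type} {Γ : VLang D} {k : ℕ}
    (hall : ∀ ϱ : CostF D 1, (⟨1, ϱ⟩ : Σ r : ℕ, CostF D r) ∈ Γ)
    {h : Op D k} (hh : h ∈ Pol Γ k) {S : Set D} {c : Fin k → D} (hc : ∀ i, c i ∈ S) :
    h c ∈ S := by
  classical
  have := hh _ (hall fun z => if z 0 ∈ S then 0 else ⊤) (fun i _ => c i) fun i => by
    simp [Feas, hc i]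
  simpa [Feas, appRows] using this

/-- Testing `ω` against the unary cost functions `±u` forces equality. -/
lemma sum_weight_mul_unary_eq_zero {D : Type} [Fintype D] [DecidableEq D] {Γ : VLang D} {k : ℕ}
    (hall : ∀ ϱ : CostF D 1, (⟨1, ϱ⟩ : Σ r : ℕ, CostF D r) ∈ Γ)
    {ω : Op D k → ℚ} (hω : ω ∈ wPol Γ k) (u : D → ℚ) (c : Fin k → D) :
    ∑ h, ω h * u (h c) = 0 := by
  have hle : ∀ u : D → ℚ, ∑ h, ω h * u (h c) ≤ 0 := fun u =>
    (improves_iff_sum_nonpos.mp (subset_improvedLang hω (hall fun z => (u (z 0) : ℚ)))).2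
      (fun i _ => c i) fun _ => WithTop.coe_ne_top
  have hneg := hle (-u)
  simp only [Pi.neg_apply, mul_neg, sum_neg_distrib, neg_nonpos] at hneg
  exact (hle u).antisymm hneg

section UnitColumns

variable {D : Type} {k : ℕ}

def unitCol (x y : D) (i : Fin k) : Fin k → D := Function.update (fun _ => x) i y

lemma unitCol_comp_finRotate (x y : D) (i : Fin k) :
    unitCol x y (finRotate k i) ∘ finRotate k = unitCol x y i := by
  rw [unitCol, Function.update_comp_equiv, Equiv.symm_apply_apply]
  rfl

lemma unitCol_mem_pair (x y : D) (i t : Fin k) :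
    unitCol x y i t ∈ ({x, y} : Set D) := by
  rcases eq_or_ne t i with rfl | hti
  · simp [unitCol]
  · simp [unitCol, Function.update_of_ne hti]

lemma finRotate_apply_ne (hk : 1 < k) (i : Fin k) : finRotate k i ≠ i := by
  have : NeZero k := ⟨by omega⟩
  rw [finRotate_apply]
  intro h
  have := Fin.ext_iff.mp (add_eq_left.mp h)
  simp [Nat.mod_eq_of_lt hk] at this

lemma not_cyclicOp_proj [Nontrivial D] (hk : 1 < k) (m : Fin k) : ¬ CyclicOp (proj D m) := by
  obtain ⟨x, y, hxy⟩ := exists_pair_ne D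
  intro hcyc
  have := hcyc (unitCol x y m)
  simp only [proj, unitCol, Function.comp_apply, Function.update_self,
    Function.update_of_ne (finRotate_apply_ne hk m)] at this
  exact hxy this.symm

end UnitColumns

lemma appRows_pair {D : Type} {k : ℕ} (h : Op D k) (a b : Fin k → D) :
    appRows h (fun t => ![a t, b t]) = ![h a, h b] := by
  ext j
  fin_cases j <;> rfl

section MixedDifference

variable {D : Type} (ϱ : CostF D 2) (x : D)

/-- On `{x, y}²` this is `mixedDiff ϱ x y y · [u = y] · [v = y]`. Values of `ϱ` are read in `ℚ`
through `untopD 0`, so it is meaningful only where `ϱ` is finite. -/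
def mixedDiff (u v : D) : ℚ :=
  (ϱ ![u, v]).untopD 0 - (ϱ ![u, x]).untopD 0 - (ϱ ![x, v]).untopD 0 + (ϱ ![x, x]).untopD 0

lemma mixedDiff_base_left (v : D) : mixedDiff ϱ x x v = 0 := by
  simp only [mixedDiff]
  ring

lemma mixedDiff_base_right (u : D) : mixedDiff ϱ x u x = 0 := by
  simp only [mixedDiff]
  ring

lemma mixedDiff_nonneg_of_mem_pair {y u v : D} (hΔ : 0 ≤ mixedDiff ϱ x y y)
    (hu : u ∈ ({x, y} : Set D)) (hv : v ∈ ({x, y} : Set D)) : 0 ≤ mixedDiff ϱ x u v := by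
  rcases hu with rfl | rfl
  · exact (mixedDiff_base_left ϱ u v).ge
  rcases hv with rfl | rfl
  · exact (mixedDiff_base_right ϱ v u).ge
  · exact hΔ

lemma mixedDiff_pos {y : D} (hxyf : ϱ ![x, y] ≠ ⊤) (hyxf : ϱ ![y, x] ≠ ⊤)
    (hxxf : ϱ ![x, x] ≠ ⊤) (hyyf : ϱ ![y, y] ≠ ⊤)
    (hlt : ϱ ![x, y] + ϱ ![y, x] < ϱ ![x, x] + ϱ ![y, y]) : 0 < mixedDiff ϱ x y y := by
  obtain ⟨a, ha⟩ := WithTop.ne_top_iff_exists.mp hxyf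
  obtain ⟨b, hb⟩ := WithTop.ne_top_iff_exists.mp hyxf
  obtain ⟨c, hc⟩ := WithTop.ne_top_iff_exists.mp hxxf
  obtain ⟨d, hd⟩ := WithTop.ne_top_iff_exists.mp hyyf
  rw [← ha, ← hb, ← hc, ← hd] at hlt
  rw [mixedDiff, ← ha, ← hb, ← hc, ← hd]
  simp only [WithTop.untopD_coe]
  norm_cast at hlt
  linarith

lemma mixedDiff_proj_unitCol {k : ℕ} {y : D} {i j : Fin k} (hij : i ≠ j) (m : Fin k) :
    mixedDiff ϱ x (unitCol x y i m) (unitCol x y j m) = 0 := by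
  rcases eq_or_ne m i with rfl | hmi
  · rw [unitCol, unitCol, Function.update_of_ne hij, mixedDiff_base_right]
  · rw [unitCol, Function.update_of_ne hmi, mixedDiff_base_left]

end MixedDifference

section SoftViolation

variable {D : Type} [Fintype D] [DecidableEq D] {Γ : VLang D} {k : ℕ} {ω : Op D k → ℚ}
  {ϱ : CostF D 2} {x y : D}

/-- `ω` improves `ϱ` on the rows `(a t, b t)`, and the three correction terms of `mixedDiff` are
unary, hence balanced by `ω`. -/
lemma sum_weight_mul_mixedDiff_nonpos
    (hall : ∀ ϱ : CostF D 1, (⟨1, ϱ⟩ : Σ r : ℕ, CostF D r) ∈ Γ) (hω : ω ∈ wPol Γ k)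
    (hϱ : Improves ω ϱ) {a b : Fin k → D} (hab : ∀ t, ![a t, b t] ∈ Feas ϱ) :
    ∑ h, ω h * mixedDiff ϱ x (h a) (h b) ≤ 0 := by
  have hle := (improves_iff_sum_nonpos.mp hϱ).2 _ hab
  simp only [appRows_pair] at hle
  have hleft := sum_weight_mul_unary_eq_zero hall hω (fun u => (ϱ ![u, x]).untopD 0) a
  have hright := sum_weight_mul_unary_eq_zero hall hω (fun v => (ϱ ![x, v]).untopD 0) b
  simp only [mixedDiff, mul_add, mul_sub, sum_add_distrib, sum_sub_distrib, ← sum_mul,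
    hleft, hright, hω.1.sum_zero]
  linarith

/-- No operation of positive weight maps two different unit columns to `y`: otherwise it
would produce `(y, y)` from the feasible rows of `(unitCol i, unitCol j)`, which either
is infeasible or is exactly what `ϱ` penalises. -/
lemma eq_of_apply_unitCol_eq_of_pos
    (hall : ∀ ϱ : CostF D 1, (⟨1, ϱ⟩ : Σ r : ℕ, CostF D r) ∈ Γ) (hω : ω ∈ wPol Γ k)
    (hϱ : Improves ω ϱ) (hxyf : ϱ ![x, y] ≠ ⊤) (hyxf : ϱ ![y, x] ≠ ⊤) (hxxf : ϱ ![x, x] ≠ ⊤)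
    (hlt : ϱ ![x, y] + ϱ ![y, x] < ϱ ![x, x] + ϱ ![y, y])
    {g : Op D k} (hg : 0 < ω g) {i j : Fin k} (hi : g (unitCol x y i) = y)
    (hj : g (unitCol x y j) = y) : i = j := by
  by_contra hij
  have hrows : ∀ t, ![unitCol x y i t, unitCol x y j t] ∈ Feas ϱ := by
    intro t
    rcases eq_or_ne t i with rfl | hti
    · simpa [Feas, unitCol, Function.update_of_ne hij] using hyxf
    rcases eq_or_ne t j with rfl | htj
    · simpa [Feas, unitCol, Function.update_of_ne hti] using hxyf
    · simpa [Feas, unitCol, Function.update_of_ne hti, Function.update_of_ne htj] using hxxf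
  by_cases hyyf : ϱ ![y, y] = ⊤
  · have hfeas := hϱ.1 g hg.ne' _ hrows
    rw [appRows_pair, hi, hj] at hfeas
    exact hfeas hyyf
  have hΔ := mixedDiff_pos ϱ x hxyf hyxf hxxf hyyf hlt
  refine (sum_weight_mul_mixedDiff_nonpos hall hω hϱ hrows).not_gt
    (sum_pos' (fun h _ => ?_) ⟨g, mem_univ g, by rw [hi, hj]; exact mul_pos hg hΔ⟩)
  rcases lt_trichotomy (ω h) 0 with hneg | hzero | hpos
  · obtain ⟨m, rfl⟩ := hω.1.neg_imp_proj h hneg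
    exact (mul_eq_zero_of_right _ (mixedDiff_proj_unitCol ϱ x hij m)).ge
  · simp [hzero]
  · have hpair := fun l => apply_mem_of_mem_pol hall (hω.1.support_mem h hpos.ne')
      (unitCol_mem_pair x y l)
    exact mul_nonneg hpos.le (mixedDiff_nonneg_of_mem_pair ϱ x hΔ.le (hpair i) (hpair j))

/-- Balancing `[· = y]` over all unit columns gives `∑_g ω g (N g - 1) = 0`, where `N g` counts
the unit columns that `g` maps to `y`. Projections have `N = 1` and operations of positive weight
have `N ≤ 1`, so no term can be negative. -/
lemma exists_apply_unitCol_eq_of_pos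
    (hall : ∀ ϱ : CostF D 1, (⟨1, ϱ⟩ : Σ r : ℕ, CostF D r) ∈ Γ) (hω : ω ∈ wPol Γ k)
    (hxy : x ≠ y)
    (huniq : ∀ g, 0 < ω g → ∀ i j, g (unitCol x y i) = y → g (unitCol x y j) = y → i = j)
    {f : Op D k} (hf : 0 < ω f) : ∃ i, f (unitCol x y i) = y := by
  by_contra! hnone
  set N : Op D k → ℚ := fun g => (#{i | g (unitCol x y i) = y} : ℕ)
  have hbal : ∑ g, ω g * (N g - 1) = 0 := by
    simp only [N, natCast_card_filter, mul_sub, mul_one, mul_sum, sum_sub_distrib]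
    rw [sum_comm, hω.1.sum_zero, sub_zero]
    exact sum_eq_zero fun i _ =>
      sum_weight_mul_unary_eq_zero hall hω (fun z => if z = y then 1 else 0) _
  refine (sum_neg' (fun g _ => ?_) ⟨f, mem_univ f, ?_⟩).ne hbal
  · rcases lt_trichotomy (ω g) 0 with hneg | hzero | hpos
    · obtain ⟨m, rfl⟩ := hω.1.neg_imp_proj g hneg
      have hN : N (proj D m) = 1 := by
        have : ({i | proj D m (unitCol x y i) = y} : Finset (Fin k)) = {m} := by
          ext i
          simp [proj, unitCol, Function.update_apply, hxy, eq_comm]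
        simp [N, this]
      rw [hN, sub_self, mul_zero]
    · simp [hzero]
    · have hN : N g ≤ 1 := by
        simp only [N, Nat.cast_le_one, card_le_one, mem_filter, mem_univ, true_and]
        exact fun i hi j hj => huniq g hpos i j hi hj
      exact mul_nonpos_of_nonneg_of_nonpos hpos.le (sub_nonpos.mpr hN)
  · have hN : N f = 0 := by simp [N, hnone]
    rw [hN, zero_sub, mul_neg_one]
    exact neg_neg_of_pos hf

/-- By cyclicity `f` agrees on `unitCol i` and `unitCol (finRotate k i)`, so it cannot send
exactly one unit column to `y`. -/
lemma not_cyclicOp_of_pos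
    (hall : ∀ ϱ : CostF D 1, (⟨1, ϱ⟩ : Σ r : ℕ, CostF D r) ∈ Γ) (hω : ω ∈ wPol Γ k)
    (hϱ : Improves ω ϱ) (hxy : x ≠ y) (hxyf : ϱ ![x, y] ≠ ⊤) (hyxf : ϱ ![y, x] ≠ ⊤)
    (hxxf : ϱ ![x, x] ≠ ⊤)
    (hlt : ϱ ![x, y] + ϱ ![y, x] < ϱ ![x, x] + ϱ ![y, y]) (hk : 1 < k)
    {f : Op D k} (hf : 0 < ω f) : ¬ CyclicOp f := by
  intro hcyc
  have huniq := fun g (hg : 0 < ω g) i j =>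
    eq_of_apply_unitCol_eq_of_pos hall hω hϱ hxyf hyxf hxxf hlt hg (i := i) (j := j)
  obtain ⟨i, hi⟩ := exists_apply_unitCol_eq_of_pos hall hω hxy huniq hf
  refine finRotate_apply_ne hk i (huniq f hf _ _ ?_ hi)
  rw [hcyc, unitCol_comp_finRotate, hi]

end SoftViolation

theorem no_soft_violating_binary_costF_general {D : Type} [Fintype D] [DecidableEq D]
    (Γ : VLang D)
    (hall : ∀ ϱ : CostF D 1, (⟨1, ϱ⟩ : Σ r : ℕ, CostF D r) ∈ Γ)
    (hcyc : ∃ k : ℕ, 1 < k ∧ ∃ f ∈ PolPlus Γ k, Idem f ∧ CyclicOp f) :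
    ∀ x y : D, x ≠ y →
      ¬ ∃ ϱ : CostF D 2, (⟨2, ϱ⟩ : Σ r : ℕ, CostF D r) ∈ wRelClo Γ ∧
          ϱ ![x, y] ≠ ⊤ ∧ ϱ ![y, x] ≠ ⊤ ∧
          ϱ ![x, y] + ϱ ![y, x] < ϱ ![x, x] + ϱ ![y, y] ∧
          (ϱ ![x, x] ≠ ⊤ ∨ ϱ ![y, y] ≠ ⊤) := by
  rintro x y hxy ⟨ϱ, hmem, hxyf, hyxf, hlt, hdiag⟩
  obtain ⟨k, hk, f, hfpos, -, hfcyc⟩ := hcyc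
  have : Nontrivial D := ⟨x, y, hxy⟩
  obtain ⟨m, rfl⟩ | ⟨ω, hω, hωf⟩ := hfpos
  · exact not_cyclicOp_proj hk m hfcyc
  have hϱ := wRelClo_subset_improvedLang hω hmem
  rcases hdiag with hxxf | hyyf
  · exact not_cyclicOp_of_pos hall hω hϱ hxy hxyf hyxf hxxf hlt hk hωf hfcyc
  · rw [add_comm (ϱ ![x, y]), add_comm (ϱ ![x, x])] at hlt
    exact not_cyclicOp_of_pos hall hω hϱ hxy.symm hyxf hxyf hyyf hlt hk hωf hfcyc

/-- If `Γ` contains all unary cost functions and `Pol⁺(Γ)` contains an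
idempotent cyclic operation, then for no two-element subset `{x,y}` of `D` is there a binary
cost function `ϱ ∈ wRelClo(Γ)` with `(x,y),(y,x)` feasible,
`ϱ(x,x)+ϱ(y,y) > ϱ(x,y)+ϱ(y,x)`, and at least one of `(x,x),(y,y)` feasible. -/
theorem no_soft_violating_binary_costF {D : Type} [Fintype D] [DecidableEq D] [Nonempty D]
    (Γ : VLang D)
    (hall : ∀ ϱ : CostF D 1, (⟨1, ϱ⟩ : Σ r : ℕ, CostF D r) ∈ Γ)
    (hcyc : ∃ k : ℕ, 1 < k ∧ ∃ f ∈ PolPlus Γ k, Idem f ∧ CyclicOp f) :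
    ∀ x y : D, x ≠ y →
      ¬ ∃ ϱ : CostF D 2, (⟨2, ϱ⟩ : Σ r : ℕ, CostF D r) ∈ wRelClo Γ ∧
          ϱ ![x, y] ≠ ⊤ ∧ ϱ ![y, x] ≠ ⊤ ∧
          ϱ ![x, y] + ϱ ![y, x] < ϱ ![x, x] + ϱ ![y, y] ∧
          (ϱ ![x, x] ≠ ⊤ ∨ ϱ ![y, y] ≠ ⊤) :=
  no_soft_violating_binary_costF_general Γ hall hcyc
end

section
/- Let Γ be a valued constraint language over a finite set D (possibly infinite as a set of cost functions) that is a core, i.e., every operation in fPol₁⁺(Γ) is bijective. Then there exists a finite sublanguage Γ' ⊆ Γ such that fPol₁⁺(Γ) = fPol₁⁺(Γ'). -/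
/-!
The unary fractional polymorphisms of a language form a compact subset of the simplex of
distributions on `D → D`, closed under convolution (composing independent random operations),
and those of `Γ` are the common ones of its finite sublanguages.

If no finite sublanguage of `Γ` were a core, each would have a fractional polymorphism putting
mass less than `1` on bijections. Convolving with it scales that mass down, so the minimiser of
the mass over the compact set has none, and by compactness neither has some fractional
polymorphism of `Γ`: then `Γ` would not be a core.

Over a core, a unary fractional polymorphism is a random permutation that never increases a cost
function on average. Permutations preserve total cost, so it preserves every cost exactly:
`fPol₁⁺` of a core is its group of automorphisms, which finitely many cost functions of `Γ`
already cut out.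
-/

open Finset Function

lemma Set.exists_finite_subset_forall_imp {α β : Type*} [Finite α] (P : α → β → Prop)
    (s : Set β) : ∃ t ⊆ s, t.Finite ∧ ∀ a, (∀ b ∈ t, P a b) → ∀ b ∈ s, P a b := by
  have : ∀ a, ∃ t ⊆ s, t.Finite ∧ ((∀ b ∈ t, P a b) → ∀ b ∈ s, P a b) := by
    intro a
    by_cases h : ∀ b ∈ s, P a b
    · exact ⟨∅, empty_subset s, finite_empty, fun _ => h⟩
    · push Not at h
      obtain ⟨b, hb, hPb⟩ := h
      exact ⟨{b}, singleton_subset_iff.2 hb, finite_singleton b, fun h' => absurd (h' b rfl) hPb⟩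
  choose t hts htfin ht using this
  exact ⟨⋃ a, t a, iUnion_subset hts, finite_iUnion htfin,
    fun a h => ht a fun b hb => h b (mem_iUnion_of_mem a hb)⟩

lemma sum_mul_sum_comp_of_bijective {ι X : Type*} [Fintype ι] [Fintype X] {w : ι → ℝ}
    (hw : w ∈ stdSimplex ℝ ι) {σ : ι → X → X} (hσ : ∀ i, 0 < w i → Bijective (σ i))
    (f : X → ℝ) : ∑ i, w i * ∑ x, f (σ i x) = ∑ x, f x := by
  have hterm : ∀ i, w i * ∑ x, f (σ i x) = w i * ∑ x, f x := fun i => by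
    rcases (hw.1 i).eq_or_lt with h | h
    · simp [← h]
    · rw [(hσ i h).sum_comp f]
  rw [sum_congr rfl fun i _ => hterm i, ← sum_mul, hw.2, one_mul]

/-- Since each `σ i` permutes `X`, the averages are exact at every point, so the variance
`∑ x, ∑ i, w i (q (σ i x) - q x)²` vanishes. -/
lemma comp_eq_of_sum_mul_comp_le {ι X : Type*} [Fintype ι] [Fintype X] {w : ι → ℝ}
    (hw : w ∈ stdSimplex ℝ ι) {σ : ι → X → X} (hσ : ∀ i, 0 < w i → Bijective (σ i))
    {q : X → ℝ} (hq : ∀ x, ∑ i, w i * q (σ i x) ≤ q x) {i : ι} (hi : 0 < w i) (x : X) :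
    q (σ i x) = q x := by
  have hmean : ∀ x, ∑ i, w i * q (σ i x) = q x := by
    suffices h : ∑ x, ∑ i, w i * q (σ i x) = ∑ x, q x from
      fun x => (sum_eq_sum_iff_of_le fun x _ => hq x).1 h x (mem_univ x)
    rw [sum_comm, ← sum_mul_sum_comp_of_bijective hw hσ q]
    simp only [mul_sum]
  have hvar : ∀ x, ∑ i, w i * (q (σ i x) - q x) ^ 2 = ∑ i, w i * q (σ i x) ^ 2 - q x ^ 2 := by
    intro x
    calc ∑ i, w i * (q (σ i x) - q x) ^ 2
        = ∑ i, w i * q (σ i x) ^ 2 - 2 * q x * ∑ i, w i * q (σ i x) + q x ^ 2 * ∑ i, w i := by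
          simp only [mul_sum, ← sum_sub_distrib, ← sum_add_distrib]
          exact sum_congr rfl fun _ _ => by ring
      _ = ∑ i, w i * q (σ i x) ^ 2 - q x ^ 2 := by rw [hmean, hw.2]; ring
  have hzero : ∑ x, ∑ i, w i * (q (σ i x) - q x) ^ 2 = 0 := by
    simp only [hvar, sum_sub_distrib]
    rw [sum_comm, ← sum_mul_sum_comp_of_bijective hw hσ (q · ^ 2)]
    simp only [mul_sum, sub_self]
  have hnonneg : ∀ x i, 0 ≤ w i * (q (σ i x) - q x) ^ 2 := fun x i =>
    mul_nonneg (hw.1 i) (sq_nonneg _)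
  have hx := (sum_eq_zero_iff_of_nonneg fun x _ => sum_nonneg fun i _ => hnonneg x i).1 hzero x
    (mem_univ x)
  have hxi := (sum_eq_zero_iff_of_nonneg fun i _ => hnonneg x i).1 hx i (mem_univ i)
  nlinarith [(mul_eq_zero.1 hxi).resolve_left hi.ne', sq_nonneg (q (σ i x) - q x)]

namespace VCSP

section Unary

variable {D : Type}

def idOp (D : Type) : Op D 1 := proj D 0

def compOp (u v : Op D 1) : Op D 1 := fun t => u fun _ => v t

def act (g : Op D 1) {r : ℕ} (x : Fin r → D) : Fin r → D := unaryFun g ∘ x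

def Preserves (g : Op D 1) {r : ℕ} (ϱ : CostF D r) : Prop := ∀ x, ϱ (act g x) = ϱ x

lemma preserves_idOp {r : ℕ} (ϱ : CostF D r) : Preserves (idOp D) ϱ := fun _ => rfl

lemma isProj_iff_eq_idOp {f : Op D 1} : IsProj f ↔ f = idOp D :=
  ⟨fun ⟨i, hi⟩ => by rwa [Subsingleton.elim i 0] at hi, fun h => ⟨0, h⟩⟩

lemma appRows_one (g : Op D 1) {r : ℕ} (xs : Fin 1 → Fin r → D) :
    appRows g xs = act g (xs 0) := by
  funext j
  exact congrArg g (funext fun i => by rw [Subsingleton.elim i 0])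

lemma bijective_act {g : Op D 1} (hg : Bijective (unaryFun g)) {r : ℕ} :
    Bijective (act g (r := r)) :=
  hg.comp_left

lemma act_compOp (u v : Op D 1) {r : ℕ} (x : Fin r → D) :
    act (compOp u v) x = act u (act v x) :=
  rfl

lemma bijective_unaryFun_compOp_iff [Finite D] {u v : Op D 1} :
    Bijective (unaryFun (compOp u v)) ↔ Bijective (unaryFun u) ∧ Bijective (unaryFun v) := by
  change Bijective (unaryFun u ∘ unaryFun v) ↔ _
  exact ⟨fun h => ⟨Finite.surjective_iff_bijective.1 h.surjective.of_comp,
    Finite.injective_iff_bijective.1 h.injective.of_comp⟩, fun ⟨hu, hv⟩ => hu.comp hv⟩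

end Unary

lemma sum_rmul_le_coe_iff {ι : Type*} [Fintype ι] {w : ι → ℝ} (hw : ∀ i, 0 ≤ w i)
    (v : ι → WithTop ℚ) (a : ℝ) :
    (∑ i with 0 < w i, rmul (w i) (v i)) ≤ (a : WithTop ℝ) ↔
      (∀ i, v i = ⊤ → w i ≤ 0) ∧ ∑ i, w i * ((v i).untop₀ : ℝ) ≤ a := by
  by_cases hfin : ∀ i, v i = ⊤ → w i ≤ 0
  · have hterm : ∀ i ∈ univ.filter (0 < w ·),
        rmul (w i) (v i) = ((w i * ((v i).untop₀ : ℝ) : ℝ) : WithTop ℝ) := by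
      intro i hi
      obtain ⟨q, hq⟩ := WithTop.ne_top_iff_exists.1
        fun h => (mem_filter.1 hi).2.not_ge (hfin i h)
      rw [← hq]
      rfl
    rw [sum_congr rfl hterm, ← WithTop.coe_sum, WithTop.coe_le_coe,
      sum_filter_of_ne fun i _ hi => (hw i).lt_of_ne' (left_ne_zero_of_mul hi)]
    exact (and_iff_right hfin).symm
  · push Not at hfin
    obtain ⟨i, hi, hwi⟩ := hfin
    have htop : ∑ i with 0 < w i, rmul (w i) (v i) = ⊤ :=
      WithTop.sum_eq_top.2 ⟨i, mem_filter.2 ⟨mem_univ i, hwi⟩, by rw [hi]; rfl⟩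
    simp only [htop, top_le_iff, WithTop.coe_ne_top, false_iff, not_and]
    exact fun h => absurd (h i hi) hwi.not_ge

section FracPol

variable {D : Type} [Fintype D] [DecidableEq D]

/-- The finite part of a cost as a real number; `∞` is sent to `0`. -/
noncomputable def finCost {r : ℕ} (ϱ : CostF D r) (x : Fin r → D) : ℝ := ((ϱ x).untop₀ : ℝ)

def unaryFPolCond {r : ℕ} (ϱ : CostF D r) : Set (Op D 1 → ℝ) :=
  {ω | ∀ x, ϱ x ≠ ⊤ → (∀ g, ϱ (act g x) = ⊤ → ω g ≤ 0) ∧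
    ∑ g, ω g * finCost ϱ (act g x) ≤ finCost ϱ x}

def unaryFPol (Δ : VLang D) : Set (Op D 1 → ℝ) :=
  {ω | ω ∈ stdSimplex ℝ (Op D 1) ∧ ∀ ϱ ∈ Δ, ω ∈ unaryFPolCond ϱ.2}

def IsFracCore (Δ : VLang D) : Prop := ∀ f ∈ fPolPlus Δ 1, Bijective (unaryFun f)

lemma mem_unaryFPolCond_iff {r : ℕ} {ϱ : CostF D r} {ω : Op D 1 → ℝ} (hω : ∀ g, 0 ≤ ω g) :
    ω ∈ unaryFPolCond ϱ ↔ ∀ xs : Fin 1 → Fin r → D, (∀ i, xs i ∈ Feas ϱ) →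
      (∑ g with 0 < ω g, rmul (ω g) (ϱ (appRows g xs))) ≤
        rmul (1 / ((1 : ℕ) : ℝ)) (∑ i, ϱ (xs i)) := by
  have key : ∀ x, ϱ x ≠ ⊤ → ((∑ g with 0 < ω g, rmul (ω g) (ϱ (act g x))) ≤
      rmul (1 / ((1 : ℕ) : ℝ)) (ϱ x) ↔ (∀ g, ϱ (act g x) = ⊤ → ω g ≤ 0) ∧
        ∑ g, ω g * finCost ϱ (act g x) ≤ finCost ϱ x) := by
    intro x hx
    obtain ⟨q, hq⟩ := WithTop.ne_top_iff_exists.1 hx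
    have hrhs : rmul (1 / ((1 : ℕ) : ℝ)) (ϱ x) = ((finCost ϱ x : ℝ) : WithTop ℝ) := by
      simp [rmul, finCost, ← hq]
    rw [hrhs]
    exact sum_rmul_le_coe_iff hω _ _
  simp only [Fin.sum_univ_one, appRows_one]
  exact ⟨fun h xs hxs => (key _ (hxs 0)).2 (h _ (hxs 0)),
    fun h x hx => (key x hx).1 (h (fun _ => x) fun _ => hx)⟩

lemma mem_unaryFPol_iff {Δ : VLang D} {ω : Op D 1 → ℝ} :
    ω ∈ unaryFPol Δ ↔ IsFracPolymorphism Δ ω :=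
  and_congr_right fun hω => forall₂_congr fun _ _ => mem_unaryFPolCond_iff hω.1

lemma mem_fPolPlus_one_iff {Δ : VLang D} {f : Op D 1} :
    f ∈ fPolPlus Δ 1 ↔ f = idOp D ∨ ∃ ω ∈ unaryFPol Δ, 0 < ω f := by
  simp only [fPolPlus, Set.mem_ofPred_eq, isProj_iff_eq_idOp, mem_unaryFPol_iff]

lemma fPolPlus_anti {Δ Δ' : VLang D} (h : Δ' ⊆ Δ) (k : ℕ) : fPolPlus Δ k ⊆ fPolPlus Δ' k := by
  rintro f (hf | ⟨ω, ⟨hω, hcond⟩, hpos⟩)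
  exacts [Or.inl hf, Or.inr ⟨ω, ⟨hω, fun ϱ hϱ => hcond ϱ (h hϱ)⟩, hpos⟩]

lemma IsFracCore.anti {Δ Δ' : VLang D} (hΔ : IsFracCore Δ) (h : Δ ⊆ Δ') : IsFracCore Δ' :=
  fun f hf => hΔ f (fPolPlus_anti h 1 hf)

lemma single_mem_unaryFPol {Δ : VLang D} {f : Op D 1} (hf : ∀ ϱ ∈ Δ, Preserves f ϱ.2) :
    Pi.single f 1 ∈ unaryFPol Δ := by
  refine ⟨single_mem_stdSimplex ℝ f, fun ϱ hϱ x hx => ⟨fun g hg => ?_, ?_⟩⟩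
  · have hgf : g ≠ f := by
      rintro rfl
      exact hx (hf ϱ hϱ x ▸ hg)
    simp [hgf]
  · simp [Pi.single_apply, finCost, hf ϱ hϱ x]

lemma feasible_act_of_pos {r : ℕ} {ϱ : CostF D r} {ω : Op D 1 → ℝ} (hω : ω ∈ unaryFPolCond ϱ)
    {x : Fin r → D} (hx : ϱ x ≠ ⊤) {g : Op D 1} (hg : 0 < ω g) : ϱ (act g x) ≠ ⊤ :=
  fun h => ((hω x hx).1 g h).not_gt hg

end FracPol

section Convolution

variable {D : Type} [Fintype D] [DecidableEq D]

/-- The distribution of `u ∘ v` for independent `u ∼ α` and `v ∼ β`. -/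
noncomputable def conv (α β : Op D 1 → ℝ) : Op D 1 → ℝ :=
  fun g => ∑ p : Op D 1 × Op D 1 with compOp p.1 p.2 = g, α p.1 * β p.2

lemma sum_conv_mul (α β c : Op D 1 → ℝ) :
    ∑ g, conv α β g * c g = ∑ u, ∑ v, α u * β v * c (compOp u v) := by
  calc ∑ g, conv α β g * c g
      = ∑ g, ∑ p : Op D 1 × Op D 1 with compOp p.1 p.2 = g,
          α p.1 * β p.2 * c (compOp p.1 p.2) := by
        refine sum_congr rfl fun g _ => ?_
        rw [conv, sum_mul]
        exact sum_congr rfl fun p hp => by rw [(mem_filter.1 hp).2]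
    _ = ∑ p : Op D 1 × Op D 1, α p.1 * β p.2 * c (compOp p.1 p.2) := sum_fiberwise _ _ _
    _ = ∑ u, ∑ v, α u * β v * c (compOp u v) := Fintype.sum_prod_type _

lemma exists_pos_of_conv_pos {α β : Op D 1 → ℝ} (hα : ∀ g, 0 ≤ α g) (hβ : ∀ g, 0 ≤ β g)
    {g : Op D 1} (hg : 0 < conv α β g) : ∃ u v, compOp u v = g ∧ 0 < α u ∧ 0 < β v := by
  obtain ⟨p, hp, hpos⟩ := exists_lt_of_sum_lt (f := fun _ => (0 : ℝ)) (by simpa [conv] using hg)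
  exact ⟨p.1, p.2, (mem_filter.1 hp).2, (hα _).lt_of_ne' (left_ne_zero_of_mul hpos.ne'),
    (hβ _).lt_of_ne' (right_ne_zero_of_mul hpos.ne')⟩

lemma conv_mem_stdSimplex {α β : Op D 1 → ℝ} (hα : α ∈ stdSimplex ℝ (Op D 1))
    (hβ : β ∈ stdSimplex ℝ (Op D 1)) : conv α β ∈ stdSimplex ℝ (Op D 1) := by
  refine ⟨fun g => sum_nonneg fun p _ => mul_nonneg (hα.1 _) (hβ.1 _), ?_⟩
  simpa [← sum_mul_sum, hα.2, hβ.2] using sum_conv_mul α β 1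

lemma conv_mem_unaryFPolCond {r : ℕ} {ϱ : CostF D r} {α β : Op D 1 → ℝ}
    (hα0 : ∀ g, 0 ≤ α g) (hβ0 : ∀ g, 0 ≤ β g)
    (hα : α ∈ unaryFPolCond ϱ) (hβ : β ∈ unaryFPolCond ϱ) : conv α β ∈ unaryFPolCond ϱ := by
  intro x hx
  refine ⟨fun g hg => not_lt.1 fun hpos => ?_, ?_⟩
  · obtain ⟨u, v, rfl, hu, hv⟩ := exists_pos_of_conv_pos hα0 hβ0 hpos
    exact feasible_act_of_pos hα (feasible_act_of_pos hβ hx hv) hu hg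
  have hinner : ∀ v, β v * ∑ u, α u * finCost ϱ (act u (act v x)) ≤ β v * finCost ϱ (act v x) := by
    intro v
    rcases (hβ0 v).eq_or_lt with hv | hv
    · simp [← hv]
    · exact mul_le_mul_of_nonneg_left (hα _ (feasible_act_of_pos hβ hx hv)).2 hv.le
  calc ∑ g, conv α β g * finCost ϱ (act g x)
      = ∑ v, β v * ∑ u, α u * finCost ϱ (act u (act v x)) := by
        rw [sum_conv_mul, sum_comm]
        simp only [mul_sum, act_compOp]
        exact sum_congr rfl fun _ _ => sum_congr rfl fun _ _ => by ring
    _ ≤ ∑ v, β v * finCost ϱ (act v x) := sum_le_sum fun v _ => hinner v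
    _ ≤ finCost ϱ x := (hβ x hx).2

lemma conv_mem_unaryFPol {Δ : VLang D} {α β : Op D 1 → ℝ} (hα : α ∈ unaryFPol Δ)
    (hβ : β ∈ unaryFPol Δ) : conv α β ∈ unaryFPol Δ :=
  ⟨conv_mem_stdSimplex hα.1 hβ.1, fun ϱ hϱ =>
    conv_mem_unaryFPolCond hα.1.1 hβ.1.1 (hα.2 ϱ hϱ) (hβ.2 ϱ hϱ)⟩

noncomputable def bijMass (μ : Op D 1 → ℝ) : ℝ := ∑ g with Bijective (unaryFun g), μ g

lemma bijMass_eq_sum_mul_indicator (μ : Op D 1 → ℝ) :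
    bijMass μ = ∑ g, μ g * if Bijective (unaryFun g) then 1 else 0 := by
  simp [bijMass, sum_filter]

lemma bijMass_conv (α β : Op D 1 → ℝ) : bijMass (conv α β) = bijMass α * bijMass β := by
  simp only [bijMass_eq_sum_mul_indicator, sum_conv_mul, bijective_unaryFun_compOp_iff,
    sum_mul_sum, ite_and]
  refine sum_congr rfl fun u _ => sum_congr rfl fun v _ => ?_
  split_ifs <;> ring

lemma bijMass_nonneg {μ : Op D 1 → ℝ} (hμ : ∀ g, 0 ≤ μ g) : 0 ≤ bijMass μ :=
  sum_nonneg fun g _ => hμ g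

lemma continuous_bijMass : Continuous (bijMass : (Op D 1 → ℝ) → ℝ) :=
  continuous_finsetSum _ fun g _ => continuous_apply g

end Convolution

section Compactness

variable {D : Type} [Fintype D] [DecidableEq D]

lemma isClosed_unaryFPolCond {r : ℕ} (ϱ : CostF D r) : IsClosed (unaryFPolCond ϱ) := by
  simp only [unaryFPolCond, Set.ofPred_and, Set.ofPred_forall]
  refine isClosed_iInter fun x => isClosed_iInter fun _ => IsClosed.inter
    (isClosed_iInter fun g => isClosed_iInter fun _ => isClosed_le (continuous_apply g)
      continuous_const)
    (isClosed_le (by fun_prop) continuous_const)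

lemma unaryFPol_eq (Δ : VLang D) :
    unaryFPol Δ = stdSimplex ℝ (Op D 1) ∩ ⋂ ϱ ∈ Δ, unaryFPolCond ϱ.2 := by
  ext ω
  simp [unaryFPol]

lemma isCompact_unaryFPol (Δ : VLang D) : IsCompact (unaryFPol Δ) := by
  rw [unaryFPol_eq]
  exact (isCompact_stdSimplex ℝ _).inter_right
    (isClosed_biInter fun ϱ _ => isClosed_unaryFPolCond ϱ.2)

lemma unaryFPol_inter_nonempty_of_finite {Γ : VLang D} {C : Set (Op D 1 → ℝ)} (hC : IsClosed C)
    (h : ∀ S ⊆ Γ, S.Finite → (unaryFPol S ∩ C).Nonempty) : (unaryFPol Γ ∩ C).Nonempty := by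
  have hK : IsCompact (stdSimplex ℝ (Op D 1) ∩ C) := (isCompact_stdSimplex ℝ _).inter_right hC
  obtain ⟨μ, ⟨hμ, hμC⟩, hμΓ⟩ := hK.inter_iInter_nonempty (fun ϱ : Γ => unaryFPolCond ϱ.1.2)
    (fun ϱ => isClosed_unaryFPolCond _) fun u => by
      obtain ⟨μ, ⟨hμ, hμu⟩, hμC⟩ := h (u.image Subtype.val : Set _) (by simp) (finite_toSet _)
      exact ⟨μ, ⟨hμ, hμC⟩, Set.mem_iInter₂.2 fun ϱ hϱ => hμu ϱ.1 (by simpa using hϱ)⟩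
  exact ⟨μ, ⟨hμ, fun ϱ hϱ => Set.mem_iInter.1 hμΓ ⟨ϱ, hϱ⟩⟩, hμC⟩

lemma exists_bijMass_eq_zero {Δ : VLang D} (hΔ : ¬ IsFracCore Δ) :
    ∃ μ ∈ unaryFPol Δ, bijMass μ = 0 := by
  obtain ⟨f, hf, hfb⟩ : ∃ f ∈ fPolPlus Δ 1, ¬ Bijective (unaryFun f) := by
    simpa [IsFracCore] using hΔ
  obtain ⟨ω, hω, hωf⟩ : ∃ ω ∈ unaryFPol Δ, 0 < ω f :=
    (mem_fPolPlus_one_iff.1 hf).resolve_left fun h => hfb (h ▸ bijective_id)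
  have hω1 : bijMass ω < 1 :=
    calc bijMass ω < ω f + bijMass ω := lt_add_of_pos_left _ hωf
      _ = ∑ g ∈ insert f (univ.filter fun g => Bijective (unaryFun g)), ω g :=
        (sum_insert (f := ω) fun h => hfb (mem_filter.1 h).2).symm
      _ ≤ ∑ g, ω g := sum_le_univ_sum_of_nonneg hω.1.1
      _ = 1 := hω.1.2
  obtain ⟨μ, hμ, hmin⟩ := (isCompact_unaryFPol Δ).exists_isMinOn
    ⟨_, single_mem_unaryFPol fun ϱ _ => preserves_idOp ϱ.2⟩ continuous_bijMass.continuousOn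
  have hle : bijMass μ ≤ bijMass ω * bijMass μ := bijMass_conv ω μ ▸ hmin (conv_mem_unaryFPol hω hμ)
  refine ⟨μ, hμ, le_antisymm ?_ (bijMass_nonneg hμ.1.1)⟩
  nlinarith [bijMass_nonneg hμ.1.1]

lemma exists_pos_not_bijective {μ : Op D 1 → ℝ} (hμ : μ ∈ stdSimplex ℝ (Op D 1))
    (h0 : bijMass μ = 0) : ∃ g, ¬ Bijective (unaryFun g) ∧ 0 < μ g := by
  have hsum := sum_filter_add_sum_filter_not univ (fun g => Bijective (unaryFun g)) μ
  rw [← bijMass, h0, zero_add, hμ.2] at hsum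
  obtain ⟨g, hg, hpos⟩ := exists_lt_of_sum_lt (f := fun _ => (0 : ℝ)) (g := μ)
    (s := univ.filter fun g => ¬ Bijective (unaryFun g))
    (by rw [sum_const_zero, hsum]; exact one_pos)
  exact ⟨g, (mem_filter.1 hg).2, hpos⟩

lemma exists_finite_isFracCore_subset {Γ : VLang D} (hΓ : IsFracCore Γ) :
    ∃ S ⊆ Γ, S.Finite ∧ IsFracCore S := by
  by_contra! h
  obtain ⟨μ, hμ, hμ0⟩ := unaryFPol_inter_nonempty_of_finite
    (isClosed_eq continuous_bijMass continuous_const) fun S hS hfin =>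
      exists_bijMass_eq_zero (h S hS hfin)
  obtain ⟨g, hgb, hg⟩ := exists_pos_not_bijective hμ.1 hμ0
  exact hgb (hΓ g (mem_fPolPlus_one_iff.2 (Or.inr ⟨μ, hμ, hg⟩)))

end Compactness

section Automorphisms

variable {D : Type} [Fintype D] [DecidableEq D]

lemma act_eq_top_of_eq_top {r : ℕ} {ϱ : CostF D r} {ω : Op D 1 → ℝ} (hω : ω ∈ unaryFPolCond ϱ)
    {g : Op D 1} (hgb : Bijective (unaryFun g)) (hg : 0 < ω g) {x : Fin r → D} (hx : ϱ x = ⊤) :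
    ϱ (act g x) = ⊤ := by
  by_contra hgx
  have hmaps : Set.MapsTo (act g) {y | ϱ y ≠ ⊤} {y | ϱ y ≠ ⊤} :=
    fun _ hy => feasible_act_of_pos hω hy hg
  have hbij := ((Set.toFinite _).injOn_iff_bijOn_of_mapsTo hmaps).1
    (bijective_act hgb).injective.injOn
  obtain ⟨y, hy, hyx⟩ := hbij.surjOn hgx
  exact hy ((bijective_act hgb).injective hyx ▸ hx)

lemma preserves_of_mem_unaryFPolCond {r : ℕ} {ϱ : CostF D r} {ω : Op D 1 → ℝ}
    (hω : ω ∈ stdSimplex ℝ (Op D 1)) (hωϱ : ω ∈ unaryFPolCond ϱ)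
    (hbij : ∀ g, 0 < ω g → Bijective (unaryFun g)) {g : Op D 1} (hg : 0 < ω g) :
    Preserves g ϱ := by
  have hq : ∀ x, ∑ h, ω h * finCost ϱ (act h x) ≤ finCost ϱ x := by
    intro x
    by_cases hx : ϱ x = ⊤
    · refine (sum_nonpos fun h _ => ?_).trans_eq (by simp [finCost, hx])
      rcases (hω.1 h).eq_or_lt with h0 | hpos
      · simp [← h0]
      · simp [finCost, act_eq_top_of_eq_top hωϱ (hbij h hpos) hpos hx]
    · exact (hωϱ x hx).2
  have hfin := comp_eq_of_sum_mul_comp_le hω (fun h hh => bijective_act (hbij h hh)) hq hg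
  intro x
  by_cases hx : ϱ x = ⊤
  · rw [hx, act_eq_top_of_eq_top hωϱ (hbij g hg) hg hx]
  · obtain ⟨a, ha⟩ := WithTop.ne_top_iff_exists.1 hx
    obtain ⟨b, hb⟩ := WithTop.ne_top_iff_exists.1 (feasible_act_of_pos hωϱ hx hg)
    have hab := hfin x
    simp only [finCost, ← ha, ← hb, WithTop.untop₀_coe, Rat.cast_inj] at hab
    rw [← ha, ← hb, hab]

lemma mem_fPolPlus_one_iff_of_isFracCore {Δ : VLang D} (hΔ : IsFracCore Δ) {f : Op D 1} :
    f ∈ fPolPlus Δ 1 ↔ Bijective (unaryFun f) ∧ ∀ ϱ ∈ Δ, Preserves f ϱ.2 := by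
  refine ⟨fun hf => ⟨hΔ f hf, ?_⟩, fun ⟨_, hf⟩ =>
    mem_fPolPlus_one_iff.2 (Or.inr ⟨_, single_mem_unaryFPol hf, by simp⟩)⟩
  rcases mem_fPolPlus_one_iff.1 hf with rfl | ⟨ω, hω, hωf⟩
  · exact fun ϱ _ => preserves_idOp ϱ.2
  · exact fun ϱ hϱ => preserves_of_mem_unaryFPolCond hω.1 (hω.2 ϱ hϱ)
      (fun g hg => hΔ g (mem_fPolPlus_one_iff.2 (Or.inr ⟨ω, hω, hg⟩))) hωf

end Automorphisms

end VCSP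

theorem exists_finite_sublanguage_same_unary_fPolPlus_general {D : Type} [Fintype D] [DecidableEq D]
    (Γ : VLang D)
    (hcore : ∀ f ∈ fPolPlus Γ 1, Function.Bijective (unaryFun f)) :
    ∃ Γ' : VLang D, Γ' ⊆ Γ ∧ Γ'.Finite ∧ fPolPlus Γ 1 = fPolPlus Γ' 1 := by
  obtain ⟨S, hSΓ, hSfin, hScore⟩ := VCSP.exists_finite_isFracCore_subset hcore
  obtain ⟨T, hTΓ, hTfin, hT⟩ := Set.exists_finite_subset_forall_imp
    (fun f ϱ => VCSP.Preserves f ϱ.2) Γ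
  have hST : S ∪ T ⊆ Γ := Set.union_subset hSΓ hTΓ
  refine ⟨S ∪ T, hST, hSfin.union hTfin, Set.ext fun f => ?_⟩
  rw [VCSP.mem_fPolPlus_one_iff_of_isFracCore hcore,
    VCSP.mem_fPolPlus_one_iff_of_isFracCore (hScore.anti Set.subset_union_left)]
  exact and_congr_right fun _ =>
    ⟨fun h ϱ hϱ => h ϱ (hST hϱ), fun h => hT f fun ϱ hϱ => h ϱ (Or.inr hϱ)⟩

/-- If `Γ` (possibly infinite) is a core in the fractional sense, then some
finite sublanguage `Γ' ⊆ Γ` has the same unary positive clone. -/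
theorem exists_finite_sublanguage_same_unary_fPolPlus {D : Type} [Fintype D] [DecidableEq D]
    [Nonempty D] (Γ : VLang D)
    (hcore : ∀ f ∈ fPolPlus Γ 1, Function.Bijective (unaryFun f)) :
    ∃ Γ' : VLang D, Γ' ⊆ Γ ∧ Γ'.Finite ∧ fPolPlus Γ 1 = fPolPlus Γ' 1 :=
  exists_finite_sublanguage_same_unary_fPolPlus_general Γ hcore
end

section
/- Let Γ be a valued constraint language over a finite set D that is a core in the fractional sense (every operation in fPol₁⁺(Γ) is bijective), and let B be the set of bijective unary operations f on D satisfying ϱ ∘ f = ϱ (f applied coordinate-wise) for every ϱ ∈ Γ. Then a unary fractional operation ω on D is a fractional polymorphism of Γ if and only if supp(ω) ⊆ B. -/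
/-!
Every `g` in the support of a unary fractional polymorphism `ω` lies in `fPol⁺(Γ)`, hence is a
bijection, so for `ϱ ∈ Γ` the maps `x ↦ g ∘ x` permute the finite set `Feas ϱ`. Summing the
inequality `∑_g ω(g) ϱ(g ∘ x) ≤ ϱ(x)` over `Feas ϱ` gives equal totals, hence equality at every
`x`: `ϱ` is harmonic for the random walk applying `g` with probability `ω(g)`. By the same
permutation invariance the Dirichlet energy `∑_x ∑_g ω(g) (ϱ(g ∘ x) - ϱ(x))²` equals
`∑_x ∑_g ω(g) ϱ(g ∘ x)² - ∑_x ϱ(x)² = 0`, so `ϱ ∘ g = ϱ`. The converse is immediate.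
-/

open Finset Function

namespace Finset

variable {α : Type*} [DecidableEq α] {F : Finset α} {σ : α → α}

theorem image_eq_self_of_mapsTo (hσ : Injective σ) (hF : ∀ x ∈ F, σ x ∈ F) : F.image σ = F :=
  eq_of_subset_of_card_le (image_subset_iff.2 hF) (card_image_of_injective F hσ).ge

theorem apply_mem_iff_of_mapsTo (hσ : Injective σ) (hF : ∀ x ∈ F, σ x ∈ F) {x : α} :
    σ x ∈ F ↔ x ∈ F := by
  refine ⟨fun hx => ?_, hF x⟩
  rw [← image_eq_self_of_mapsTo hσ hF, mem_image] at hx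
  obtain ⟨y, hy, hyx⟩ := hx
  rwa [← hσ hyx]

theorem sum_comp_eq_of_mapsTo {M : Type*} [AddCommMonoid M] (hσ : Injective σ)
    (hF : ∀ x ∈ F, σ x ∈ F) (h : α → M) : ∑ x ∈ F, h (σ x) = ∑ x ∈ F, h x := by
  conv_rhs => rw [← image_eq_self_of_mapsTo hσ hF]
  rw [sum_image hσ.injOn]

end Finset

theorem comp_eq_of_sum_mul_comp_le_s19 {ι α : Type*} [DecidableEq α] {S : Finset ι} {F : Finset α}
    {w : ι → ℝ} {σ : ι → α → α} {v : α → ℝ}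
    (hw : ∀ i ∈ S, 0 < w i) (hw1 : ∑ i ∈ S, w i = 1)
    (hσ : ∀ i ∈ S, Injective (σ i)) (hF : ∀ i ∈ S, ∀ x ∈ F, σ i x ∈ F)
    (hv : ∀ x ∈ F, ∑ i ∈ S, w i * v (σ i x) ≤ v x) :
    ∀ i ∈ S, ∀ x ∈ F, v (σ i x) = v x := by
  have sum_mean : ∀ h : α → ℝ, ∑ x ∈ F, ∑ i ∈ S, w i * h (σ i x) = ∑ x ∈ F, h x := by
    intro h
    rw [sum_comm]
    calc ∑ i ∈ S, ∑ x ∈ F, w i * h (σ i x) = ∑ i ∈ S, w i * ∑ x ∈ F, h x :=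
          sum_congr rfl fun i hi => by rw [← mul_sum, sum_comp_eq_of_mapsTo (hσ i hi) (hF i hi)]
      _ = ∑ x ∈ F, h x := by rw [← sum_mul, hw1, one_mul]
  have harmonic : ∀ x ∈ F, ∑ i ∈ S, w i * v (σ i x) = v x :=
    (sum_eq_sum_iff_of_le hv).1 (sum_mean v)
  have energy_zero : ∑ x ∈ F, ∑ i ∈ S, w i * (v (σ i x) - v x) ^ 2 = 0 := by
    have local_energy : ∀ x ∈ F, ∑ i ∈ S, w i * (v (σ i x) - v x) ^ 2
        = ∑ i ∈ S, w i * v (σ i x) ^ 2 - v x ^ 2 := by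
      intro x hx
      calc ∑ i ∈ S, w i * (v (σ i x) - v x) ^ 2
          = ∑ i ∈ S, w i * v (σ i x) ^ 2 - 2 * v x * ∑ i ∈ S, w i * v (σ i x)
              + v x ^ 2 * ∑ i ∈ S, w i := by
            simp only [mul_sum, ← sum_sub_distrib, ← sum_add_distrib]
            exact sum_congr rfl fun i _ => by ring
        _ = ∑ i ∈ S, w i * v (σ i x) ^ 2 - v x ^ 2 := by rw [harmonic x hx, hw1]; ring
    rw [sum_congr rfl local_energy, sum_sub_distrib, sum_mean (v · ^ 2), sub_self]
  have hnonneg : ∀ x, ∀ i ∈ S, 0 ≤ w i * (v (σ i x) - v x) ^ 2 :=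
    fun x i hi => mul_nonneg (hw i hi).le (sq_nonneg _)
  intro i hi x hx
  have hterm := (sum_eq_zero_iff_of_nonneg (hnonneg x)).1
    ((sum_eq_zero_iff_of_nonneg fun x _ => sum_nonneg (hnonneg x)).1 energy_zero x hx) i hi
  exact sub_eq_zero.1 <| pow_eq_zero_iff two_ne_zero |>.1 <|
    (mul_eq_zero.1 hterm).resolve_left (hw i hi).ne'

theorem sum_rmul_le_coe_iff {ι : Type*} {S : Finset ι} {c : ι → ℝ} {y : ι → WithTop ℚ} {a : ℝ} :
    ∑ i ∈ S, rmul (c i) (y i) ≤ (a : WithTop ℝ) ↔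
      (∀ i ∈ S, y i ≠ ⊤) ∧ ∑ i ∈ S, c i * (((y i).untopD 0 : ℚ) : ℝ) ≤ a := by
  by_cases hfin : ∀ i ∈ S, y i ≠ ⊤
  · have hsum : ∑ i ∈ S, rmul (c i) (y i)
        = ((∑ i ∈ S, c i * (((y i).untopD 0 : ℚ) : ℝ) : ℝ) : WithTop ℝ) := by
      rw [WithTop.coe_sum]
      refine sum_congr rfl fun i hi => ?_
      obtain ⟨q, hq⟩ := WithTop.ne_top_iff_exists.1 (hfin i hi)
      rw [← hq]
      rfl
    rw [hsum, WithTop.coe_le_coe]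
    exact ⟨fun h => ⟨hfin, h⟩, And.right⟩
  · push Not at hfin
    obtain ⟨i, hi, htop⟩ := hfin
    have hsum : ∑ i ∈ S, rmul (c i) (y i) = ⊤ := WithTop.sum_eq_top.2 ⟨i, hi, by rw [htop]; rfl⟩
    rw [hsum]
    exact iff_of_false (WithTop.not_top_le_coe a) fun h => h.1 i hi htop

variable {D : Type} [Fintype D] [DecidableEq D]

theorem IsFracOp.sum_pos_eq_one {m : ℕ} {ω : Op D m → ℝ} (hω : IsFracOp ω) :
    ∑ g ∈ univ.filter (0 < ω ·), ω g = 1 := by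
  rw [sum_filter_of_ne fun g _ hg => (hω.1 g).lt_of_ne' hg, hω.2]

/-- The unary fractional-polymorphism inequality for one cost function; finiteness of each
`ϱ (g ∘ x)` is a separate conjunct, so `untopD 0` is only ever read on finite costs. -/
def IsUnaryFracPolymorphismOf {r : ℕ} (ω : Op D 1 → ℝ) (ϱ : CostF D r) : Prop :=
  ∀ x ∈ Feas ϱ, (∀ g, 0 < ω g → unaryFun g ∘ x ∈ Feas ϱ) ∧
    ∑ g ∈ univ.filter (0 < ω ·), ω g * (((ϱ (unaryFun g ∘ x)).untopD 0 : ℚ) : ℝ)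
      ≤ (((ϱ x).untopD 0 : ℚ) : ℝ)

theorem isFracPolymorphism_unary_iff {Γ : VLang D} {ω : Op D 1 → ℝ} :
    IsFracPolymorphism Γ ω ↔ IsFracOp ω ∧ ∀ ϱ ∈ Γ, IsUnaryFracPolymorphismOf ω ϱ.2 := by
  refine and_congr_right fun _ => forall₂_congr fun ϱ _ => ?_
  have hrhs : ∀ x ∈ Feas ϱ.2, rmul (1 / ((1 : ℕ) : ℝ)) (∑ _ : Fin 1, ϱ.2 x)
      = (((ϱ.2 x).untopD 0 : ℚ) : ℝ) := by
    intro x hx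
    obtain ⟨q, hq⟩ := WithTop.ne_top_iff_exists.1 hx
    rw [Fin.sum_univ_one, ← hq]
    simp [rmul]
  constructor
  · intro h x hx
    have := h (fun _ => x) fun _ => hx
    rw [hrhs x hx, sum_rmul_le_coe_iff] at this
    exact ⟨fun g hg => this.1 g (mem_filter.2 ⟨mem_univ g, hg⟩), this.2⟩
  · intro h xs hxs
    obtain ⟨x, rfl⟩ : ∃ x, xs = fun _ => x :=
      ⟨xs 0, funext fun i => congrArg xs (Subsingleton.elim i 0)⟩
    rw [hrhs x (hxs 0), sum_rmul_le_coe_iff]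
    exact ⟨fun g hg => (h x (hxs 0)).1 g (mem_filter.1 hg).2, (h x (hxs 0)).2⟩

theorem IsUnaryFracPolymorphismOf.comp_eq {r : ℕ} {ϱ : CostF D r} {ω : Op D 1 → ℝ}
    (hϱ : IsUnaryFracPolymorphismOf ω ϱ) (hω : IsFracOp ω)
    (hbij : ∀ g, 0 < ω g → Bijective (unaryFun g)) :
    ∀ g, 0 < ω g → ∀ x, ϱ (unaryFun g ∘ x) = ϱ x := by
  set F := univ.filter fun x => ϱ x ≠ ⊤
  have hinj : ∀ g ∈ univ.filter (0 < ω ·), Injective (unaryFun g ∘ · : (Fin r → D) → _) :=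
    fun g hg => (hbij g (mem_filter.1 hg).2).injective.comp_left
  have hmaps : ∀ g ∈ univ.filter (0 < ω ·), ∀ x ∈ F, unaryFun g ∘ x ∈ F := by
    intro g hg x hx
    exact mem_filter.2 ⟨mem_univ _, (hϱ x (mem_filter.1 hx).2).1 g (mem_filter.1 hg).2⟩
  have hval := comp_eq_of_sum_mul_comp_le_s19 (v := fun x => (((ϱ x).untopD 0 : ℚ) : ℝ))
    (fun g hg => (mem_filter.1 hg).2) hω.sum_pos_eq_one hinj hmaps
    (fun x hx => (hϱ x (mem_filter.1 hx).2).2)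
  intro g hg x
  have hgS : g ∈ univ.filter (0 < ω ·) := mem_filter.2 ⟨mem_univ g, hg⟩
  by_cases hx : ϱ x = ⊤
  · have hgx : unaryFun g ∘ x ∉ F := by
      rw [apply_mem_iff_of_mapsTo (hinj g hgS) (hmaps g hgS)]
      simpa [F] using hx
    simp only [F, mem_filter, mem_univ, true_and, not_not] at hgx
    rw [hgx, hx]
  · have hxF : x ∈ F := mem_filter.2 ⟨mem_univ x, hx⟩
    obtain ⟨q, hq⟩ := WithTop.ne_top_iff_exists.1 hx
    obtain ⟨p, hp⟩ := WithTop.ne_top_iff_exists.1 (mem_filter.1 (hmaps g hgS x hxF)).2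
    have := hval g hgS x hxF
    rw [← hp, ← hq] at this ⊢
    simpa using this

theorem unary_fractional_polymorphism_iff_general {D : Type} [Fintype D] [DecidableEq D]
    (Γ : VLang D)
    (hcore : ∀ f ∈ fPolPlus Γ 1, Function.Bijective (unaryFun f))
    (B : Set (Op D 1))
    (hB : B = {f : Op D 1 | Function.Bijective (unaryFun f) ∧
      ∀ ϱ ∈ Γ, ∀ x : Fin ϱ.1 → D, ϱ.2 (fun j => unaryFun f (x j)) = ϱ.2 x})
    (ω : Op D 1 → ℝ) (hω : IsFracOp ω) :
    IsFracPolymorphism Γ ω ↔ ∀ g : Op D 1, 0 < ω g → g ∈ B := by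
  subst hB
  constructor
  · intro hfp g hg
    have hbij : ∀ g, 0 < ω g → Bijective (unaryFun g) := fun g hg => hcore g (Or.inr ⟨ω, hfp, hg⟩)
    exact ⟨hbij g hg, fun ϱ hϱ =>
      ((isFracPolymorphism_unary_iff.1 hfp).2 ϱ hϱ).comp_eq hω hbij g hg⟩
  · intro hsupp
    refine isFracPolymorphism_unary_iff.2 ⟨hω, fun ϱ hϱ x hx => ?_⟩
    have hinv : ∀ g, 0 < ω g → ϱ.2 (unaryFun g ∘ x) = ϱ.2 x := fun g hg => (hsupp g hg).2 ϱ hϱ x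
    refine ⟨fun g hg => by rw [Feas, Set.mem_ofPred_eq, hinv g hg]; exact hx, le_of_eq ?_⟩
    rw [sum_congr rfl fun g hg => by rw [hinv g (mem_filter.1 hg).2], ← sum_mul,
      hω.sum_pos_eq_one, one_mul]

/-- For a core language `Γ` (in the fractional sense) with `B` the set of
bijective unary operations preserving every cost function of `Γ`, a unary fractional operation
is a fractional polymorphism of `Γ` iff its support is contained in `B`. -/
theorem unary_fractional_polymorphism_iff {D : Type} [Fintype D] [DecidableEq D] [Nonempty D]
    (Γ : VLang D)
    (hcore : ∀ f ∈ fPolPlus Γ 1, Function.Bijective (unaryFun f))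
    (B : Set (Op D 1))
    (hB : B = {f : Op D 1 | Function.Bijective (unaryFun f) ∧
      ∀ ϱ ∈ Γ, ∀ x : Fin ϱ.1 → D, ϱ.2 (fun j => unaryFun f (x j)) = ϱ.2 x})
    (ω : Op D 1 → ℝ) (hω : IsFracOp ω) :
    IsFracPolymorphism Γ ω ↔ ∀ g : Op D 1, 0 < ω g → g ∈ B :=
  unary_fractional_polymorphism_iff_general Γ hcore B hB ω hω
end
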